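/- Let ω be a nonempty bounded open subset of ℝ² and set Ω := ω × (−1, 1) ⊂ ℝ³. Let φ : ℝ³ → ℝ be a C^∞ function, not identically zero, whose (compact) support is contained in Ω. Set δ := dist(supp φ, ∂ω × (−1, 1)) (Euclidean distance in ℝ³) and M := max over ℝ³ of |φ|. Let χ denote the indicator function of ω_{δ/2} := {y ∈ ω : dist(y, ∂ω) > δ/2}, and let ρ_{δ/3} be a standard mollifier of radius δ/3 on ℝ². Define v(y, x3) := M·(ρ_{δ/3} ⋆ χ)(y) + ∫_0^{x3} φ(y, z) dz for (y, x3) ∈ Ω. Then: (a) δ > 0; (b) for every (y, x3) ∈ Ω, the partial derivative of v with respect to x3 at (y, x3) exists and equals φ(y, x3); and (c) v(y, x3) ≥ 0 for all (y, x3) ∈ Ω. -/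
import Mathlib


open MeasureTheory Metric Set

noncomputable section

/-- A standard mollifier of radius `r` on `ℝ²`. -/
def IsMollifier (r : ℝ) (ρ : EuclideanSpace ℝ (Fin 2) → ℝ) : Prop :=
  ContDiff ℝ (⊤ : ℕ∞) ρ ∧ (∀ z, 0 ≤ ρ z) ∧ tsupport ρ ⊆ Metric.closedBall 0 r ∧ (∫ z, ρ z) = 1

/-- Convolution of two real-valued functions on `ℝ²`. -/
def conv2 (f g : EuclideanSpace ℝ (Fin 2) → ℝ) (y : EuclideanSpace ℝ (Fin 2)) : ℝ :=
  ∫ z, f z * g (y - z)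

/-- The set `ω_{δ/2} = {y ∈ ω : dist(y, ∂ω) > δ/2}`. -/
def ωhalf (ω : Set (EuclideanSpace ℝ (Fin 2))) (δ : ℝ) : Set (EuclideanSpace ℝ (Fin 2)) :=
  {y ∈ ω | δ / 2 < Metric.infDist y (frontier ω)}

/-- The test field `v(y,x₃) = M·(ρ_{δ/3} ⋆ χ_{ω_{δ/2}})(y) + ∫₀^{x₃} φ(y,z) dz`. -/
def vtest (ω : Set (EuclideanSpace ℝ (Fin 2))) (δ M : ℝ)
    (ρ : EuclideanSpace ℝ (Fin 2) → ℝ) (φ : EuclideanSpace ℝ (Fin 2) × ℝ → ℝ)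
    (y : EuclideanSpace ℝ (Fin 2)) (x3 : ℝ) : ℝ :=
  M * conv2 ρ ((ωhalf ω δ).indicator fun _ => (1 : ℝ)) y + ∫ z in (0 : ℝ)..x3, φ (y, z)

/-- **Construction of admissible test fields (part (iii) of the convergence theorem).**
With `δ` the Euclidean distance in `ℝ³` between `supp φ` and the lateral boundary
`∂ω × (−1,1)`, and `M = max |φ|`, the field `v` satisfies: (a) `δ > 0`;
(b) `∂v/∂x₃ = φ` on `Ω = ω × (−1,1)`; (c) `v ≥ 0` on `Ω`. -/
theorem stmt4 (ω : Set (EuclideanSpace ℝ (Fin 2))) (hωopen : IsOpen ω)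
    (hωbdd : Bornology.IsBounded ω) (hωne : ω.Nonempty)
    (φ : EuclideanSpace ℝ (Fin 2) × ℝ → ℝ) (hφsm : ContDiff ℝ (⊤ : ℕ∞) φ)
    (hφc : HasCompactSupport φ)
    (hφsupp : tsupport φ ⊆ ω ×ˢ Set.Ioo (-1 : ℝ) 1) (hφne : φ ≠ 0)
    (δ M : ℝ)
    (hδ : δ = sInf (Set.image2
      (fun p q : EuclideanSpace ℝ (Fin 2) × ℝ =>
        Real.sqrt (dist p.1 q.1 ^ 2 + dist p.2 q.2 ^ 2))
      (tsupport φ) ((frontier ω) ×ˢ Set.Ioo (-1 : ℝ) 1)))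
    (hM : IsGreatest (Set.range fun p => |φ p|) M)
    (ρ : EuclideanSpace ℝ (Fin 2) → ℝ) (hρ : IsMollifier (δ / 3) ρ) :
    0 < δ ∧
    (∀ y ∈ ω, ∀ x3 ∈ Set.Ioo (-1 : ℝ) 1,
      HasDerivAt (fun t => vtest ω δ M ρ φ y t) (φ (y, x3)) x3) ∧
    (∀ y ∈ ω, ∀ x3 ∈ Set.Ioo (-1 : ℝ) 1, 0 ≤ vtest ω δ M ρ φ y x3) := by
  classical
  have hMnn : 0 ≤ M := le_trans (abs_nonneg (φ 0)) (hM.2 ⟨0, rfl⟩)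
  -- ω ≠ univ
  have hωuniv : ω ≠ univ := fun h => NormedSpace.unbounded_univ ℝ _ (h ▸ hωbdd)
  -- frontier ω nonempty
  have hfrne : (frontier ω).Nonempty := nonempty_frontier_iff.2 ⟨hωne, hωuniv⟩
  -- tsupport φ nonempty
  obtain ⟨p0, hp0⟩ : ∃ p, φ p ≠ 0 := Function.ne_iff.mp hφne
  have hp0mem : p0 ∈ tsupport φ := subset_closure (by simpa [Function.mem_support] using hp0)
  -- the set whose inf is δ is nonempty
  have hSne : (Set.image2
      (fun p q : EuclideanSpace ℝ (Fin 2) × ℝ =>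
        Real.sqrt (dist p.1 q.1 ^ 2 + dist p.2 q.2 ^ 2))
      (tsupport φ) ((frontier ω) ×ˢ Set.Ioo (-1 : ℝ) 1)).Nonempty := by
    obtain ⟨q1, hq1⟩ := hfrne
    exact ⟨_, p0, hp0mem, (q1, 0), ⟨hq1, by norm_num⟩, rfl⟩
  have hSbdd : BddBelow (Set.image2
      (fun p q : EuclideanSpace ℝ (Fin 2) × ℝ =>
        Real.sqrt (dist p.1 q.1 ^ 2 + dist p.2 q.2 ^ 2))
      (tsupport φ) ((frontier ω) ×ˢ Set.Ioo (-1 : ℝ) 1)) := by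
    refine ⟨0, ?_⟩
    rintro x ⟨p, hp, q, hq, rfl⟩
    exact Real.sqrt_nonneg _
  -- compact projection
  have hK2c : IsCompact (Prod.fst '' tsupport φ) := hφc.image continuous_fst
  have hK2sub : Prod.fst '' tsupport φ ⊆ ω := by
    rintro _ ⟨p, hp, rfl⟩
    exact (hφsupp hp).1
  obtain ⟨ε, hε, hthick⟩ := hK2c.exists_thickening_subset_open hωopen hK2sub
  have hfrdist : ∀ p ∈ tsupport φ, ∀ q1 ∈ frontier ω, ε ≤ dist p.1 q1 := by
    intro p hp q1 hq1
    have hq1nω : q1 ∉ ω := fun h => (hωopen.frontier_eq ▸ hq1).2 h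
    have : q1 ∉ Metric.thickening ε (Prod.fst '' tsupport φ) := fun h => hq1nω (hthick h)
    rw [Metric.mem_thickening_iff] at this
    push_neg at this
    have := this p.1 ⟨p, hp, rfl⟩
    rwa [dist_comm] at this
  -- (a) δ > 0
  have hδpos : 0 < δ := by
    rw [hδ]
    refine lt_of_lt_of_le hε (le_csInf hSne ?_)
    rintro x ⟨p, hp, q, hq, rfl⟩
    calc ε ≤ dist p.1 q.1 := hfrdist p hp q.1 hq.1
    _ = Real.sqrt (dist p.1 q.1 ^ 2) := (Real.sqrt_sq dist_nonneg).symm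
    _ ≤ Real.sqrt (dist p.1 q.1 ^ 2 + dist p.2 q.2 ^ 2) :=
        Real.sqrt_le_sqrt (le_add_of_nonneg_right (sq_nonneg _))
  -- key: if (y,z) ∈ tsupport φ for some z, then y is δ-far from frontier ω
  have hfar : ∀ y : EuclideanSpace ℝ (Fin 2), (∃ z, (y, z) ∈ tsupport φ) →
      ∀ q1 ∈ frontier ω, δ ≤ dist y q1 := by
    rintro y ⟨z, hz⟩ q1 hq1
    have hzIoo : z ∈ Set.Ioo (-1 : ℝ) 1 := (hφsupp hz).2
    have hmem : Real.sqrt (dist y q1 ^ 2 + dist z z ^ 2) ∈ (Set.image2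
        (fun p q : EuclideanSpace ℝ (Fin 2) × ℝ =>
          Real.sqrt (dist p.1 q.1 ^ 2 + dist p.2 q.2 ^ 2))
        (tsupport φ) ((frontier ω) ×ˢ Set.Ioo (-1 : ℝ) 1)) :=
      ⟨(y, z), hz, (q1, z), ⟨hq1, hzIoo⟩, rfl⟩
    have h1 : δ ≤ Real.sqrt (dist y q1 ^ 2 + dist z z ^ 2) := by
      rw [hδ]; exact csInf_le hSbdd hmem
    simpa [dist_self, Real.sqrt_sq dist_nonneg] using h1
  -- the convolution is nonnegative
  have hconvnn : ∀ y, 0 ≤ conv2 ρ ((ωhalf ω δ).indicator fun _ => (1 : ℝ)) y := by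
    intro y
    refine integral_nonneg fun z => mul_nonneg (hρ.2.1 z) ?_
    exact Set.indicator_nonneg (fun _ _ => zero_le_one) _
  -- the convolution equals 1 near the support of φ
  have hconv1 : ∀ y : EuclideanSpace ℝ (Fin 2), (∃ z, (y, z) ∈ tsupport φ) →
      conv2 ρ ((ωhalf ω δ).indicator fun _ => (1 : ℝ)) y = 1 := by
    intro y hy
    have hyω : y ∈ ω := by obtain ⟨z, hz⟩ := hy; exact (hφsupp hz).1
    have hyfr : δ ≤ Metric.infDist y (frontier ω) := by
      by_contra h
      push_neg at h
      obtain ⟨q1, hq1, hq1d⟩ := (Metric.infDist_lt_iff hfrne).1 h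
      exact absurd (hfar y hy q1 hq1) (not_le.2 hq1d)
    have hycompl : δ ≤ Metric.infDist y ωᶜ := by
      obtain ⟨u, hu, hueq⟩ := exists_mem_frontier_infDist_compl_eq_dist hyω hωuniv
      rw [hueq]
      exact hfar y hy u hu
    have hkey : ∀ z, ρ z * ((ωhalf ω δ).indicator fun _ => (1 : ℝ)) (y - z) = ρ z := by
      intro z
      by_cases hz : ρ z = 0
      · simp [hz]
      have hztsupp : z ∈ tsupport ρ := subset_closure (by simpa [Function.mem_support] using hz)
      have hznorm : dist z 0 ≤ δ / 3 := hρ.2.2.1 hztsupp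
      have hznorm' : ‖z‖ ≤ δ / 3 := by simpa using hznorm
      have hdyz : dist y (y - z) ≤ δ / 3 := by
        rw [dist_eq_norm]
        simpa using hznorm'
      have hyzω : y - z ∈ ω := by
        by_contra h
        have := Metric.infDist_le_dist_of_mem (x := y) (s := ωᶜ) h
        linarith
      have hyzfr : δ / 2 < Metric.infDist (y - z) (frontier ω) := by
        have h1 : Metric.infDist y (frontier ω) ≤
            Metric.infDist (y - z) (frontier ω) + dist y (y - z) :=
          Metric.infDist_le_infDist_add_dist
        linarith
      rw [Set.indicator_of_mem (show y - z ∈ ωhalf ω δ from ⟨hyzω, hyzfr⟩), mul_one]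
    unfold conv2
    simp only [hkey]
    exact hρ.2.2.2
  refine ⟨hδpos, ?_, ?_⟩
  -- (b) the derivative
  · intro y hy x3 hx3
    have hcont : Continuous fun z : ℝ => φ (y, z) :=
      hφsm.continuous.comp (Continuous.prodMk_right y)
    have hder : HasDerivAt (fun t => ∫ z in (0:ℝ)..t, φ (y, z)) (φ (y, x3)) x3 :=
      intervalIntegral.integral_hasDerivAt_right (hcont.intervalIntegrable 0 x3)
        (hcont.stronglyMeasurableAtFilter volume (nhds x3)) hcont.continuousAt
    simpa [vtest] using
      hder.const_add (M * conv2 ρ ((ωhalf ω δ).indicator fun _ => (1 : ℝ)) y)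
  -- (c) nonnegativity
  · intro y hy x3 hx3
    by_cases hcase : ∃ z, (y, z) ∈ tsupport φ
    · have hc1 := hconv1 y hcase
      have hbd : ∀ x ∈ Set.uIoc (0:ℝ) x3, ‖φ (y, x)‖ ≤ M := fun x _ => by
        simpa [Real.norm_eq_abs] using hM.2 (Set.mem_range_self (y, x))
      have hintbd : ‖∫ z in (0:ℝ)..x3, φ (y, z)‖ ≤ M * |x3 - 0| :=
        intervalIntegral.norm_integral_le_of_norm_le_const hbd
      have hx3abs : |x3| ≤ 1 := le_of_lt (abs_lt.2 ⟨hx3.1, hx3.2⟩)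
      have h2 : M * |x3 - 0| ≤ M := by
        rw [sub_zero]; nlinarith [abs_nonneg x3]
      have h3 : -M ≤ ∫ z in (0:ℝ)..x3, φ (y, z) := by
        have := neg_abs_le (∫ z in (0:ℝ)..x3, φ (y, z))
        rw [Real.norm_eq_abs] at hintbd
        linarith
      rw [vtest, hc1, mul_one]
      linarith
    · push_neg at hcase
      have h0 : ∀ z : ℝ, φ (y, z) = 0 := fun z =>
        image_eq_zero_of_notMem_tsupport (hcase z)
      have : (∫ z in (0:ℝ)..x3, φ (y, z)) = 0 := by simp [h0]
      rw [vtest, this, add_zero]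
      exact mul_nonneg hMnn (hconvnn y)
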